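/- arXiv:2205.12525 — 5 statements merged into one kernel-verified Lean document; each statement's English description precedes it below -/
import Mathlib

section
/- Let H be a complex Hilbert space and let A and B be compact operators on H. If A + B + A ∘ B = 0, then A ∘ B = B ∘ A. -/
/-!
With `X = 1 + A` and `Y = 1 + B` the hypothesis reads `X * Y = 1`, so `Y` is injective. By the
Fredholm alternative for the compact operator `B`, an injective `1 + B` is invertible, hence its
left inverse `X` is also a right inverse. Expanding `Y * X = 1` gives `B + A + B * A = 0`, and
comparing with `A + B + A * B = 0` yields `A * B = B * A`.
-/

open Module End

namespace IsCompactOperator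

variable {𝕜 X : Type*} [NontriviallyNormedField 𝕜] [NormedAddCommGroup X] [NormedSpace 𝕜 X]
  [CompleteSpace X] {B : X →L[𝕜] X}

theorem isUnit_one_add_of_injective (hB : IsCompactOperator B)
    (hinj : Function.Injective ⇑(1 + B)) : IsUnit (1 + B) := by
  have hnot : ¬ HasEigenvalue (B : End 𝕜 X) (-1) := by
    intro hμ
    obtain ⟨x, hx⟩ := hμ.exists_hasEigenvector
    have hBx : B x = -x := by simpa using hx.apply_eq_smul
    exact hx.2 (hinj (by simp [hBx]))
  have hres := (hB.hasEigenvalue_or_mem_resolventSet (neg_ne_zero.2 one_ne_zero)).resolve_left hnot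
  rw [spectrum.mem_resolventSet_iff] at hres
  simpa [add_comm] using hres.neg

theorem one_add_mul_eq_one_of_mul_eq_one (hB : IsCompactOperator B) {A : X →L[𝕜] X}
    (h : A * (1 + B) = 1) : (1 + B) * A = 1 := by
  have hinj : Function.Injective ⇑(1 + B) :=
    Function.LeftInverse.injective (g := A) fun x => congr($h x)
  obtain ⟨u, hu⟩ := isUnit_one_add_of_injective hB hinj
  rw [← hu] at h ⊢
  rw [Units.mul_eq_one_iff_eq_inv.1 h, u.mul_inv]

end IsCompactOperator

theorem compact_add_add_mul_eq_zero_comm_general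
    {H : Type*} [NormedAddCommGroup H] [InnerProductSpace ℂ H] [CompleteSpace H]
    (A B : H →L[ℂ] H) (hB : IsCompactOperator B)
    (h : A + B + A * B = 0) : A * B = B * A := by
  have hXY : (1 + A) * (1 + B) = 1 := by
    calc (1 + A) * (1 + B) = 1 + (A + B + A * B) := by noncomm_ring
      _ = 1 := by rw [h, add_zero]
  have hYX := IsCompactOperator.one_add_mul_eq_one_of_mul_eq_one hB hXY
  calc A * B = (1 + A) * (1 + B) - 1 - A - B := by noncomm_ring
    _ = (1 + B) * (1 + A) - 1 - A - B := by rw [hXY, hYX]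
    _ = B * A := by noncomm_ring

/-- If `A, B` are compact operators on a complex Hilbert space with
`A + B + A ∘ B = 0`, then `A ∘ B = B ∘ A`. -/
theorem compact_add_add_mul_eq_zero_comm
    {H : Type*} [NormedAddCommGroup H] [InnerProductSpace ℂ H] [CompleteSpace H]
    (A B : H →L[ℂ] H) (hA : IsCompactOperator A) (hB : IsCompactOperator B)
    (h : A + B + A * B = 0) : A * B = B * A :=
  compact_add_add_mul_eq_zero_comm_general A B hB h
end

section
/- Let H be a complex Hilbert space, let A be a compact operator on H and let λ be a complex number. Then there exists a compact self-adjoint operator B on H such that |A + λ·1| = B + |λ|·1, where |X| denotes the absolute value √(X* ∘ X) of the operator X (the positive square root of X* ∘ X given by the continuous functional calculus) and X* denotes the Hilbert-space adjoint. -/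
/-!
Put `K = A*A + λA* + λ̄A`, so that `(A + λ)*(A + λ) = K + |λ|²`. The operator `K` is compact and
self-adjoint: compactness of `A*` follows from `‖A* y‖² ≤ ‖AA* y‖ ‖y‖`, which makes `A*` on the unit
ball uniformly controlled by the compact operator `AA*`. Hence `|A + λ| = f(K) + |λ|` with
`f(x) = √(x + |λ|²) - |λ|`, and since `f(0) = 0`, `f(K)` lies in every closed *-subalgebra
containing `K`, in particular in the compact operators.
-/

open Set Metric

theorem TotallyBounded.image_of_dist_control {X Y Z : Type*} [PseudoMetricSpace Y]
    [PseudoMetricSpace Z] {s : Set X} {f : X → Y} {g : X → Z} (hg : TotallyBounded (g '' s))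
    (hfg : ∀ ε > 0, ∃ δ > 0, ∀ x ∈ s, ∀ y ∈ s, dist (g x) (g y) < δ → dist (f x) (f y) < ε) :
    TotallyBounded (f '' s) := by
  refine Metric.totallyBounded_iff.2 fun ε hε => ?_
  obtain ⟨δ, hδ, hfg⟩ := hfg ε hε
  obtain ⟨t, hts, htfin, hcover⟩ := finite_approx_of_totallyBounded hg δ hδ
  obtain ⟨u, hus, hufin, rfl⟩ := htfin.exists_subset_finite_image_eq hts
  refine ⟨f '' u, hufin.image f, ?_⟩
  rintro _ ⟨x, hx, rfl⟩
  obtain ⟨y, hy, hxy⟩ : ∃ y ∈ u, dist (g x) (g y) < δ := by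
    simpa using hcover (mem_image_of_mem g hx)
  exact mem_iUnion₂.2 ⟨f y, mem_image_of_mem f hy, hfg x hx y (hus hy) hxy⟩

open ContinuousLinearMap
open scoped InnerProduct

section Adjoint

variable {𝕜 E F : Type*} [RCLike 𝕜] [NormedAddCommGroup E] [InnerProductSpace 𝕜 E]
  [CompleteSpace E] [NormedAddCommGroup F] [InnerProductSpace 𝕜 F] [CompleteSpace F]

theorem ContinuousLinearMap.norm_adjoint_apply_sq_le (A : E →L[𝕜] F) (y : F) :
    ‖(A†) y‖ ^ 2 ≤ ‖(A ∘L A†) y‖ * ‖y‖ := by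
  rw [apply_norm_sq_eq_inner_adjoint_left, adjoint_adjoint]
  exact re_inner_le_norm _ _

theorem IsCompactOperator.adjoint {A : E →L[𝕜] F} (hA : IsCompactOperator A) :
    IsCompactOperator (A†) := by
  have hAA : TotallyBounded ((A ∘L A†) '' closedBall 0 1) :=
    ((hA.comp_clm (A†)).isCompact_closure_image_closedBall 1).totallyBounded.subset subset_closure
  refine (isCompactOperator_iff_isCompact_closure_image_closedBall (A† : F →ₗ[𝕜] E) one_pos).2
    ((hAA.image_of_dist_control fun ε hε => ?_).closure.isCompact_of_isClosed isClosed_closure)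
  refine ⟨ε ^ 2 / 2, by positivity, fun x hx y hy hxy => ?_⟩
  rw [dist_eq_norm, ← map_sub] at hxy ⊢
  have hxy_norm : ‖x - y‖ ≤ 2 := by
    rw [mem_closedBall_zero_iff] at hx hy
    linarith [norm_sub_le x y]
  refine (pow_lt_pow_iff_left₀ (norm_nonneg _) hε.le two_ne_zero).1 ?_
  calc ‖(A†) (x - y)‖ ^ 2 ≤ ‖(A ∘L A†) (x - y)‖ * ‖x - y‖ := norm_adjoint_apply_sq_le A (x - y)
    _ ≤ ‖(A ∘L A†) (x - y)‖ * 2 := by gcongr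
    _ < ε ^ 2 := by linarith

end Adjoint

def compactOperatorStarSubalgebra (𝕜 H : Type*) [RCLike 𝕜] [NormedAddCommGroup H]
    [InnerProductSpace 𝕜 H] [CompleteSpace H] : NonUnitalStarSubalgebra 𝕜 (H →L[𝕜] H) where
  carrier := {T | IsCompactOperator T}
  add_mem' := IsCompactOperator.add
  zero_mem' := isCompactOperator_zero
  mul_mem' _ hT := hT.clm_comp _
  smul_mem' c _ hT := hT.smul c
  star_mem' hT := hT.adjoint

instance (𝕜 H : Type*) [RCLike 𝕜] [NormedAddCommGroup H] [InnerProductSpace 𝕜 H]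
    [CompleteSpace H] : IsClosed (compactOperatorStarSubalgebra 𝕜 H : Set (H →L[𝕜] H)) :=
  isClosed_setOfPred_isCompactOperator

theorem IsCompactOperator.cfc {H : Type*} [NormedAddCommGroup H] [InnerProductSpace ℂ H]
    [CompleteSpace H] {T : H →L[ℂ] H} (hT : IsCompactOperator T) {f : ℝ → ℝ}
    (hf : ContinuousOn f (quasispectrum ℝ T)) (hf0 : f 0 = 0) :
    IsCompactOperator (cfc f T : H →L[ℂ] H) := by
  rw [← cfcₙ_eq_cfc hf hf0]
  exact cfcₙ_mem (𝕜' := ℂ) (s := compactOperatorStarSubalgebra ℂ H) f hT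

theorem star_add_smul_one_mul_self {A : Type*} [Ring A] [StarRing A] [Algebra ℂ A]
    [StarModule ℂ A] (a : A) (l : ℂ) :
    star (a + l • 1) * (a + l • 1) =
      star a * a + l • star a + star l • a + ((‖l‖ ^ 2 : ℝ) : ℂ) • 1 := by
  have : l * star l = ((‖l‖ ^ 2 : ℝ) : ℂ) := by
    rw [Complex.star_def, Complex.mul_conj, Complex.normSq_eq_norm_sq]
  simp only [star_add, star_smul, star_one, add_mul, mul_add, smul_mul_assoc, mul_smul_comm,
    mul_one, one_mul, smul_add, smul_smul, this]
  abel

theorem CFC.sqrt_add_algebraMap {A : Type*} [CStarAlgebra A] [PartialOrder A] [StarOrderedRing A]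
    {a : A} (ha : IsSelfAdjoint a) {r : ℝ} (h : 0 ≤ a + algebraMap ℝ A r) :
    CFC.sqrt (a + algebraMap ℝ A r) = cfc (fun x => √(x + r)) a := by
  have hcfc : a + algebraMap ℝ A r = cfc (· + r) a := by rw [cfc_add_const .., cfc_id' ..]
  rw [CFC.sqrt_eq_real_sqrt _ h, cfcₙ_eq_cfc, hcfc, ← cfc_comp' ..]

open ContinuousLinearMap in
/-- Lemma 3.1 for `M = B(H)`: for a compact operator `A` and `λ ∈ ℂ`, the absolute
value `|A + λ·1| = √((A + λ·1)* ∘ (A + λ·1))` is of the form `B + |λ|·1` with `B`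
compact and self-adjoint. -/
theorem abs_compact_plus_scalar
    {H : Type*} [NormedAddCommGroup H] [InnerProductSpace ℂ H] [CompleteSpace H]
    (A : H →L[ℂ] H) (hA : IsCompactOperator A) (l : ℂ) :
    ∃ B : H →L[ℂ] H, IsCompactOperator B ∧ IsSelfAdjoint B ∧
      CFC.sqrt (adjoint (A + l • (1 : H →L[ℂ] H)) * (A + l • (1 : H →L[ℂ] H)))
        = B + ((‖l‖ : ℝ) : ℂ) • (1 : H →L[ℂ] H) := by
  have hsmul_one (r : ℝ) : (r : ℂ) • (1 : H →L[ℂ] H) = algebraMap ℝ (H →L[ℂ] H) r := by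
    rw [Complex.coe_smul, Algebra.algebraMap_eq_smul_one]
  set K := star A * A + l • star A + star l • A
  have hK : IsCompactOperator K :=
    ((hA.clm_comp (star A)).add (hA.adjoint.smul l)).add (hA.smul (star l))
  have hKsa : IsSelfAdjoint K := by
    simp only [IsSelfAdjoint, K, star_add, star_smul, star_mul, star_star]
    abel
  have hT := star_add_smul_one_mul_self A l
  rw [hsmul_one] at hT
  have hT_nonneg : 0 ≤ K + algebraMap ℝ (H →L[ℂ] H) (‖l‖ ^ 2) :=
    hT ▸ star_mul_self_nonneg (A + l • 1)
  refine ⟨cfc (fun x => √(x + ‖l‖ ^ 2) - ‖l‖) K, hK.cfc (by fun_prop) (by simp), cfc_predicate _ _,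
    ?_⟩
  rw [← star_eq_adjoint, hT, CFC.sqrt_add_algebraMap hKsa hT_nonneg, hsmul_one,
    ← cfc_add_const ..]
  simp_rw [sub_add_cancel]
end

section
/- Let H be a complex Hilbert space, let A be a bounded operator on H of finite rank and let λ be a complex number, and set X = A + λ·1. Then there exist a bounded operator B on H of finite rank and a complex number μ such that X ∘ (B + μ·1) ∘ X = X. That is, the unital algebra of finite-rank-plus-scalar operators is a (von Neumann) regular ring. -/
/-!
The finite-rank operators form a two-sided ideal `F` of `H →L[ℂ] H` in which every element `A`
has an inner inverse: the range of `A` is finite-dimensional, hence topologically complemented,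
so a right inverse of `A` onto its range composed with a continuous projection onto that range
works. Modulo `F`, `X = A + λ` is the scalar `λ`, which has the inner inverse `λ⁻¹` (with
`0⁻¹ = 0`). A ring is regular as soon as an ideal and the quotient by it are, and the inner
inverse of `X` produced this way is `λ⁻¹` plus an element of `F`.
-/

namespace TwoSidedIdeal

variable {R : Type*} [Ring R] {I : TwoSidedIdeal R}

lemma mul_mul_sub_mem_of_sub_mem {a s x : R} (has : a - s ∈ I) (hs : s * x * s = s) :
    a * x * a - a ∈ I := by
  have hsplit : a * x * a - a = (a - s) * x * a + s * x * (a - s) - (a - s) + (s * x * s - s) := by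
    noncomm_ring
  rw [hsplit, hs, sub_self, add_zero]
  exact I.sub_mem (I.add_mem (I.mul_mem_right _ _ (I.mul_mem_right _ _ has))
    (I.mul_mem_left _ _ has)) has

/-- If `u := a - a x a` has an inner inverse `y`, then `a (x + y - x a y - y a x + x a y a x) a`
expands to `a x a + u y u = a`. -/
lemma exists_mul_mul_eq_of_mul_mul_sub_mem (hI : ∀ u ∈ I, ∃ y ∈ I, u * y * u = u) {a x : R}
    (hx : a * x * a - a ∈ I) : ∃ y ∈ I, a * (y + x) * a = a := by
  obtain ⟨y, hyI, hy⟩ := hI (a - a * x * a) (neg_sub (a * x * a) a ▸ I.neg_mem hx)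
  refine ⟨y - x * a * y - y * a * x + x * a * y * a * x, ?_, ?_⟩
  · exact I.add_mem (I.sub_mem (I.sub_mem hyI (I.mul_mem_left _ _ hyI))
      (I.mul_mem_right _ _ (I.mul_mem_right _ _ hyI)))
      (I.mul_mem_right _ _ (I.mul_mem_right _ _ (I.mul_mem_left _ _ hyI)))
  · calc a * (y - x * a * y - y * a * x + x * a * y * a * x + x) * a
        = (a - a * x * a) * y * (a - a * x * a) + a * x * a := by noncomm_ring
      _ = a := by rw [hy]; abel

end TwoSidedIdeal

namespace ContinuousLinearMap

variable (𝕜 E : Type*) [RCLike 𝕜] [NormedAddCommGroup E] [NormedSpace 𝕜 E]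

def finiteRankIdeal : TwoSidedIdeal (E →L[𝕜] E) :=
  .mk' {T | FiniteDimensional 𝕜 (LinearMap.range (T : E →ₗ[𝕜] E))}
    (by rw [Set.mem_ofPred_eq, toLinearMap_zero, LinearMap.range_zero]; infer_instance)
    (fun {S T} (_ : FiniteDimensional 𝕜 _) (_ : FiniteDimensional 𝕜 _) ↦
      Submodule.finiteDimensional_of_le (LinearMap.range_add_le (S : E →ₗ[𝕜] E) T))
    (fun {T} hT ↦ by rwa [Set.mem_ofPred_eq, toLinearMap_neg, LinearMap.range_neg])
    (fun {S T} (_ : FiniteDimensional 𝕜 _) ↦ by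
      rw [Set.mem_ofPred_eq, toLinearMap_mul, Module.End.mul_eq_comp, LinearMap.range_comp]
      infer_instance)
    (fun {S T} (_ : FiniteDimensional 𝕜 _) ↦ by
      rw [Set.mem_ofPred_eq, toLinearMap_mul, Module.End.mul_eq_comp]
      exact Submodule.finiteDimensional_of_le (LinearMap.range_comp_le_range _ _))

variable {𝕜 E}

@[simp]
lemma mem_finiteRankIdeal {T : E →L[𝕜] E} :
    T ∈ finiteRankIdeal 𝕜 E ↔ FiniteDimensional 𝕜 (LinearMap.range (T : E →ₗ[𝕜] E)) := by
  rw [finiteRankIdeal, TwoSidedIdeal.mem_mk']; rfl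

lemma exists_mem_finiteRankIdeal_mul_mul_eq (A : E →L[𝕜] E) (hA : A ∈ finiteRankIdeal 𝕜 E) :
    ∃ B ∈ finiteRankIdeal 𝕜 E, A * B * A = A := by
  have := mem_finiteRankIdeal.mp hA
  obtain ⟨P, hP⟩ :=
    Submodule.ClosedComplemented.of_finiteDimensional (LinearMap.range (A : E →ₗ[𝕜] E))
  obtain ⟨g, hg⟩ := (A : E →ₗ[𝕜] E).rangeRestrict.exists_rightInverse_of_surjective
    (A : E →ₗ[𝕜] E).range_rangeRestrict
  refine ⟨(LinearMap.toContinuousLinearMap g).comp P, ?_, ?_⟩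
  · exact mem_finiteRankIdeal.mpr <|
      Submodule.finiteDimensional_of_le (LinearMap.range_comp_le_range (P : E →ₗ[𝕜] _) g)
  · ext x
    have hPA : P (A x) = (A : E →ₗ[𝕜] E).rangeRestrict x := hP ((A : E →ₗ[𝕜] E).rangeRestrict x)
    have hAg := congr_arg Subtype.val (LinearMap.congr_fun hg ((A : E →ₗ[𝕜] E).rangeRestrict x))
    simpa [hPA] using hAg

end ContinuousLinearMap

theorem finiteRank_plus_scalar_regular_general
    {H : Type*} [NormedAddCommGroup H] [InnerProductSpace ℂ H]
    (A : H →L[ℂ] H) (hA : FiniteDimensional ℂ (LinearMap.range (A : H →ₗ[ℂ] H))) (l : ℂ)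
    (X : H →L[ℂ] H) (hX : X = A + l • (1 : H →L[ℂ] H)) :
    ∃ (B : H →L[ℂ] H) (m : ℂ), FiniteDimensional ℂ (LinearMap.range (B : H →ₗ[ℂ] H)) ∧
      X * (B + m • (1 : H →L[ℂ] H)) * X = X := by
  have hXl : X - l • 1 ∈ ContinuousLinearMap.finiteRankIdeal ℂ H := by
    rwa [hX, add_sub_cancel_right, ContinuousLinearMap.mem_finiteRankIdeal]
  have hscalar : (l • 1 : H →L[ℂ] H) * (l⁻¹ • 1) * (l • 1) = l • 1 := by
    simp only [smul_mul_smul_comm, one_mul, mul_inv_mul_cancel]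
  obtain ⟨B, hB, hXBX⟩ := TwoSidedIdeal.exists_mul_mul_eq_of_mul_mul_sub_mem
    ContinuousLinearMap.exists_mem_finiteRankIdeal_mul_mul_eq
    (TwoSidedIdeal.mul_mul_sub_mem_of_sub_mem hXl hscalar)
  exact ⟨B, l⁻¹, ContinuousLinearMap.mem_finiteRankIdeal.mp hB, hXBX⟩

/-- The unital algebra of finite-rank-plus-scalar operators on a complex Hilbert
space is a von Neumann regular ring: for `X = A + λ·1` with `A` of finite rank there
exist a finite-rank `B` and `μ ∈ ℂ` with `X ∘ (B + μ·1) ∘ X = X`. -/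
theorem finiteRank_plus_scalar_regular
    {H : Type*} [NormedAddCommGroup H] [InnerProductSpace ℂ H] [CompleteSpace H]
    (A : H →L[ℂ] H) (hA : FiniteDimensional ℂ (LinearMap.range (A : H →ₗ[ℂ] H))) (l : ℂ)
    (X : H →L[ℂ] H) (hX : X = A + l • (1 : H →L[ℂ] H)) :
    ∃ (B : H →L[ℂ] H) (m : ℂ), FiniteDimensional ℂ (LinearMap.range (B : H →ₗ[ℂ] H)) ∧
      X * (B + m • (1 : H →L[ℂ] H)) * X = X :=
  finiteRank_plus_scalar_regular_general A hA l X hX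
end

section
/- Let H be a complex Hilbert space and let Q be a bounded operator on H with Q ∘ Q = Q. Then the spectrum of the operator |Q| = √(Q* ∘ Q) is contained in {0} ∪ [1, ‖Q‖]; in particular, the spectrum of |Q| contains no point of the open interval (0, 1). -/
/-! For an idempotent `q`, the element `a = q⋆q` satisfies `a² - a = (a - q)⋆(a - q) ≥ 0`.
Since the square root is operator monotone, `|q| = √a ≤ √(a²) = |q|²`, so every point `t`
of the spectrum of the positive element `|q|` satisfies `t ≤ t²`, i.e. `t = 0` or `t ≥ 1`.
The upper bound comes from `‖|q|‖ = ‖q‖`. -/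

open CFC

theorem sq_star_mul_self_sub_star_mul_self_of_isIdempotentElem {R : Type*} [Ring R] [StarRing R]
    {q : R} (hq : IsIdempotentElem q) :
    (star q * q) ^ 2 - star q * q = star (star q * q - q) * (star q * q - q) := by
  have hq' : star q * star q = star q := by rw [← star_mul, hq.eq]
  simp only [star_sub, star_mul, star_star, sq, sub_mul, mul_sub]
  rw [mul_assoc (star q) q q, hq.eq, ← mul_assoc (star q) (star q) q, hq']
  abel

theorem star_mul_self_le_sq_of_isIdempotentElem {R : Type*} [Ring R] [PartialOrder R] [StarRing R]
    [StarOrderedRing R] {q : R} (hq : IsIdempotentElem q) :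
    star q * q ≤ (star q * q) ^ 2 := by
  rw [← sub_nonneg, sq_star_mul_self_sub_star_mul_self_of_isIdempotentElem hq]
  exact star_mul_self_nonneg _

section CStarAlgebra

variable {A : Type*} [CStarAlgebra A] [PartialOrder A] [StarOrderedRing A]

theorem CFC.abs_le_sq_abs_of_isIdempotentElem {q : A} (hq : IsIdempotentElem q) :
    abs q ≤ abs q ^ 2 :=
  calc abs q = sqrt (star q * q) := rfl
    _ ≤ sqrt ((star q * q) ^ 2) := sqrt_le_sqrt _ _ (star_mul_self_le_sq_of_isIdempotentElem hq)
    _ = abs q ^ 2 := by rw [sqrt_sq _ (star_mul_self_nonneg q), abs_sq]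

theorem spectrum_subset_zero_union_Ici_one_of_le_sq {a : A} (ha : 0 ≤ a) (ha₂ : a ≤ a ^ 2) :
    spectrum ℝ a ⊆ {0} ∪ Set.Ici 1 := by
  intro x hx
  have hx₀ : 0 ≤ x := spectrum_nonneg_of_nonneg ha hx
  have hx₂ : x ≤ x ^ 2 := by
    have hcfc : cfc (id : ℝ → ℝ) a ≤ cfc (· ^ 2 : ℝ → ℝ) a := by
      rwa [cfc_id ℝ a, cfc_pow_id a 2]
    exact (cfc_le_iff _ _ a).mp hcfc x hx
  rcases hx₀.eq_or_lt with rfl | hpos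
  · exact Or.inl rfl
  · exact Or.inr (le_of_mul_le_mul_left (by rwa [mul_one, ← sq]) hpos)

theorem IsSelfAdjoint.le_norm_of_mem_spectrum {a : A} (ha : IsSelfAdjoint a) {x : ℝ}
    (hx : x ∈ spectrum ℝ a) : x ≤ ‖a‖ :=
  (le_algebraMap_iff_spectrum_le ha).mp ha.le_algebraMap_norm_self x hx

end CStarAlgebra

open ContinuousLinearMap in
/-- Theorem 3.7 for `M = B(H)`, bounded case: if `Q` is a bounded idempotent on a
complex Hilbert space, then the spectrum of `|Q| = √(Q* ∘ Q)` is contained in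
`{0} ∪ [1, ‖Q‖]`; in particular it misses the open interval `(0, 1)`. -/
theorem spectrum_abs_idempotent
    {H : Type*} [NormedAddCommGroup H] [InnerProductSpace ℂ H] [CompleteSpace H]
    (Q : H →L[ℂ] H) (h : Q * Q = Q) :
    spectrum ℝ (CFC.sqrt (adjoint Q * Q)) ⊆ {0} ∪ Set.Icc 1 ‖Q‖ := by
  rw [← star_eq_adjoint, ← CFC.abs]
  intro x hx
  have hle : x ≤ ‖Q‖ := by
    simpa using (abs_nonneg Q).isSelfAdjoint.le_norm_of_mem_spectrum hx
  obtain hx₀ | hx₁ := spectrum_subset_zero_union_Ici_one_of_le_sq (abs_nonneg Q)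
    (abs_le_sq_abs_of_isIdempotentElem h) hx
  exacts [Or.inl hx₀, Or.inr ⟨hx₁, hle⟩]
end

section
/- Let H be a complex Hilbert space and let X be a bounded operator on H such that X ∘ X = X and X = A + λ·1 for some compact operator A and complex number λ. Then there exists a bounded operator P on H of finite rank with P ∘ P = P such that X = P or X = 1 − P. -/
/-!
Write `X = A + l • 1`. Expanding `X * X = X` gives `(l * l - l) • 1 = A * (1 - A - (2 * l) • 1)`,
a compact operator. If `l * l ≠ l`, the identity is compact, so `H` is finite-dimensional and
`P = X` works. Otherwise `l = 0` or `l = 1`, and then `X = A` or `1 - X = -A` is a compact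
idempotent; its range is closed and it acts as the identity there, so the range is
finite-dimensional by Riesz's theorem.
-/

section Compact

variable {𝕜 : Type*} [NontriviallyNormedField 𝕜] [CompleteSpace 𝕜]
  {E : Type*} [AddCommGroup E] [Module 𝕜 E] [TopologicalSpace E] [T2Space E]
  [IsTopologicalAddGroup E] [ContinuousSMul 𝕜 E]

theorem FiniteDimensional.of_isCompactOperator_smul_one {c : 𝕜} (hc : c ≠ 0)
    (h : IsCompactOperator (c • 1 : E →L[𝕜] E)) : FiniteDimensional 𝕜 E :=
  .of_isCompactOperator_id <| (IsCompactOperator.smul_iff₀ hc).mp h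

theorem IsCompactOperator.finiteDimensional_range_of_isIdempotentElem {P : E →L[𝕜] E}
    (hP : IsCompactOperator P) (hidem : IsIdempotentElem P) :
    FiniteDimensional 𝕜 (LinearMap.range (P : E →ₗ[𝕜] E)) := by
  have hidem' := ContinuousLinearMap.IsIdempotentElem.toLinearMap hidem
  have hmaps : ∀ v ∈ LinearMap.range (P : E →ₗ[𝕜] E), P v ∈ LinearMap.range (P : E →ₗ[𝕜] E) :=
    fun v _ ↦ LinearMap.mem_range_self _ v
  have hclosed : IsClosed (LinearMap.range (P : E →ₗ[𝕜] E) : Set E) := by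
    rw [LinearMap.IsIdempotentElem.range_eq_ker_one_sub hidem']
    exact (1 - P).isClosed_ker
  have hrestrict_eq_id : (P : E →ₗ[𝕜] E).restrict hmaps = LinearMap.id := by
    ext ⟨v, hv⟩
    exact (LinearMap.IsIdempotentElem.mem_range_iff hidem').mp hv
  have hcompact := hP.restrict hmaps hclosed
  rw [hrestrict_eq_id] at hcompact
  exact .of_isCompactOperator_id hcompact

end Compact

theorem IsIdempotentElem.smul_one_eq_mul {𝕜 R : Type*} [CommRing 𝕜] [Ring R] [Algebra 𝕜 R]
    {a : R} {l : 𝕜} (h : IsIdempotentElem (a + l • 1)) :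
    (l * l - l) • (1 : R) = a * (1 - a - (2 * l) • 1) := by
  unfold IsIdempotentElem at h
  simp only [mul_add, add_mul, mul_sub, smul_add, smul_mul_assoc, mul_smul_comm, smul_smul,
    mul_one, one_mul] at h ⊢
  linear_combination (norm := module) h

theorem idempotent_compact_plus_scalar_form_general
    {H : Type*} [NormedAddCommGroup H] [InnerProductSpace ℂ H]
    (A : H →L[ℂ] H) (hA : IsCompactOperator A) (l : ℂ)
    (X : H →L[ℂ] H) (hX : X = A + l • (1 : H →L[ℂ] H)) (h : X * X = X) :
    ∃ P : H →L[ℂ] H, FiniteDimensional ℂ (LinearMap.range (P : H →ₗ[ℂ] H)) ∧ P * P = P ∧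
      (X = P ∨ X = 1 - P) := by
  subst hX
  rcases eq_or_ne (l * l - l) 0 with hl | hl
  · rcases IsIdempotentElem.iff_eq_zero_or_one.mp (sub_eq_zero.mp hl) with rfl | rfl
    · rw [zero_smul, add_zero] at h ⊢
      exact ⟨A, hA.finiteDimensional_range_of_isIdempotentElem h, h, .inl rfl⟩
    · have hneg : 1 - (A + (1 : ℂ) • 1) = -A := by rw [one_smul]; abel
      have hP : IsIdempotentElem (-A) := hneg ▸ IsIdempotentElem.one_sub h
      refine ⟨-A, hA.neg.finiteDimensional_range_of_isIdempotentElem hP, hP, .inr ?_⟩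
      rw [← hneg, sub_sub_cancel]
  · have hcompact : IsCompactOperator ((l * l - l) • 1 : H →L[ℂ] H) := by
      rw [IsIdempotentElem.smul_one_eq_mul h]
      exact hA.comp_clm _
    have := FiniteDimensional.of_isCompactOperator_smul_one hl hcompact
    exact ⟨_, inferInstance, h, .inl rfl⟩

/-- Lemmas 3.3 and 3.4 combined, for `M = B(H)`: every idempotent of the algebra
`K(H) + ℂ·1` is of the form `P` or `1 - P` with `P` a finite-rank idempotent. -/
theorem idempotent_compact_plus_scalar_form
    {H : Type*} [NormedAddCommGroup H] [InnerProductSpace ℂ H] [CompleteSpace H]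
    (A : H →L[ℂ] H) (hA : IsCompactOperator A) (l : ℂ)
    (X : H →L[ℂ] H) (hX : X = A + l • (1 : H →L[ℂ] H)) (h : X * X = X) :
    ∃ P : H →L[ℂ] H, FiniteDimensional ℂ (LinearMap.range (P : H →ₗ[ℂ] H)) ∧ P * P = P ∧
      (X = P ∨ X = 1 - P) :=
  idempotent_compact_plus_scalar_form_general A hA l X hX h
end
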